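/- arXiv:1501.01147 — 4 statements merged into one kernel-verified Lean document; each statement's English description precedes it below -/
import Mathlib

section
/- Let X be a finite set and ≤ a partial order on X. Then there exists a map f : X → (Fin 3 → ℝ) with x ≤ y if and only if f x i ≤ f y i for all i (i.e., the order has dimension at most 3), if and only if there exist affinely independent points A, B, C ∈ ℝ² together with maps c : X → ℝ² and r : X → ℝ with r x > 0 for all x such that, writing T(x) = {c x + r x • p : p ∈ convexHull {A, B, C}}, one has x ≤ y if and only if T(x) ⊆ T(y). That is, a finite partial order has dimension at most 3 if and only if it is isomorphic to the containment order of a family of positive homothets of a fixed triangle in the plane. -/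
/-!
Let the triangle be `T = convexHull (range b)` for an affine basis `b`, and let `ℓᵢ` be the
linear part of the `i`-th barycentric coordinate. Then `c + r • T` is cut out by the half-planes
`-ℓᵢ q ≤ hᵢ(c, r)`, where `hᵢ(c, r) = r * coordᵢ 0 - ℓᵢ c`, and each bound is attained at a vertex
of `c + r • T`; hence `c + r • T ⊆ c' + r' • T` iff `h(c, r) ≤ h(c', r')` componentwise. Since
`∑ i, hᵢ(c, r) = r`, every vector of `ℝ³` with positive coordinate sum is `h(c, r)` for some
positive homothet, and a finite order embedded in `ℝ³` can be shifted to have such coordinates.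
-/

open Set

def RepresentableByHomothets (X : Type*) [LE X] {V : Type*} [AddCommGroup V] [Module ℝ V]
    (T : Set V) : Prop :=
  ∃ (c : X → V) (r : X → ℝ), (∀ x, 0 < r x) ∧
    ∀ x y : X, x ≤ y ↔ (fun p => c x + r x • p) '' T ⊆ (fun p => c y + r y • p) '' T

lemma mem_image_add_smul_iff {V : Type*} [AddCommGroup V] [Module ℝ V] {S : Set V} (c q : V)
    {r : ℝ} (hr : r ≠ 0) : q ∈ (fun p => c + r • p) '' S ↔ r⁻¹ • (q - c) ∈ S := by
  constructor
  · rintro ⟨p, hp, rfl⟩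
    simpa [smul_smul, hr] using hp
  · intro h
    exact ⟨_, h, by simp [smul_smul, hr]⟩

lemma exists_affineIndependent_triple_iff {k V : Type*} [DivisionRing k] [AddCommGroup V]
    [Module k V] [FiniteDimensional k V] (hV : Module.finrank k V = 2) (P : Set V → Prop) :
    (∃ A B C : V, AffineIndependent k ![A, B, C] ∧ P {A, B, C}) ↔
      ∃ b : AffineBasis (Fin 3) k V, P (range b) := by
  have hrange : ∀ A B C : V, range ![A, B, C] = {A, B, C} := fun A B C => by
    rw [Matrix.range_cons, Matrix.range_cons_cons_empty, singleton_union]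
  constructor
  · rintro ⟨A, B, C, hind, hP⟩
    refine ⟨⟨![A, B, C], hind,
      hind.affineSpan_eq_top_iff_card_eq_finrank_add_one.2 (by simp [hV])⟩, ?_⟩
    exact (hrange A B C).symm ▸ hP
  · rintro ⟨b, hP⟩
    have hb : ![b 0, b 1, b 2] = ⇑b := by
      ext i : 1; fin_cases i <;> rfl
    refine ⟨b 0, b 1, b 2, hb ▸ b.ind, ?_⟩
    rwa [← hb, hrange] at hP

namespace AffineBasis

variable {ι V : Type*} [AddCommGroup V] [Module ℝ V] (b : AffineBasis ι ℝ V)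

noncomputable def homothetCoord (i : ι) (c : V) (r : ℝ) : ℝ :=
  r * b.coord i 0 - (b.coord i).linear c

lemma mul_coord_inv_smul_sub (i : ι) (c q : V) {r : ℝ} (hr : r ≠ 0) :
    r * b.coord i (r⁻¹ • (q - c)) = (b.coord i).linear q + b.homothetCoord i c r := by
  rw [congr_fun (b.coord i).decomp, homothetCoord]
  simp only [Pi.add_apply, map_smul, map_sub, smul_eq_mul]
  field_simp
  ring

lemma homothetCoord_neg_smul (i : ι) (p : V) (r : ℝ) :
    b.homothetCoord i (-(r • p)) r = r * b.coord i p := by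
  rw [homothetCoord, congr_fun (b.coord i).decomp p]
  simp only [Pi.add_apply, map_neg, map_smul, smul_eq_mul]
  ring

lemma mem_homothet_iff (c q : V) {r : ℝ} (hr : 0 < r) :
    q ∈ (fun p => c + r • p) '' convexHull ℝ (range b) ↔
      ∀ i, -(b.coord i).linear q ≤ b.homothetCoord i c r := by
  rw [mem_image_add_smul_iff c q hr.ne', b.convexHull_eq_nonneg_coord]
  refine forall_congr' fun i => ?_
  rw [← mul_nonneg_iff_of_pos_left hr, b.mul_coord_inv_smul_sub i c q hr.ne',
    neg_le_iff_add_nonneg']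

lemma homothet_subset_homothet_iff [Nontrivial ι] {c c' : V} {r r' : ℝ} (hr : 0 < r)
    (hr' : 0 < r') :
    (fun p => c + r • p) '' convexHull ℝ (range b) ⊆
        (fun p => c' + r' • p) '' convexHull ℝ (range b) ↔
      ∀ i, b.homothetCoord i c r ≤ b.homothetCoord i c' r' := by
  refine ⟨fun h i => ?_, fun h q hq => ?_⟩
  · obtain ⟨j, hji⟩ := exists_ne i
    have hvertex : c + r • b j ∈ (fun p => c + r • p) '' convexHull ℝ (range b) :=
      ⟨b j, subset_convexHull ℝ _ (mem_range_self j), rfl⟩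
    have hside : -(b.coord i).linear (c + r • b j) = b.homothetCoord i c r := by
      have := b.mul_coord_inv_smul_sub i c (c + r • b j) hr.ne'
      rw [add_sub_cancel_left, smul_smul, inv_mul_cancel₀ hr.ne', one_smul,
        b.coord_apply_ne hji.symm, mul_zero] at this
      linarith
    exact hside ▸ (b.mem_homothet_iff c' _ hr').1 (h hvertex) i
  · exact (b.mem_homothet_iff c' q hr').2 fun i =>
      ((b.mem_homothet_iff c q hr).1 hq i).trans (h i)

lemma exists_homothetCoord_eq [Fintype ι] (t : ι → ℝ) (ht : 0 < ∑ i, t i) :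
    ∃ c r, 0 < r ∧ ∀ i, b.homothetCoord i c r = t i := by
  set r := ∑ i, t i
  refine ⟨-(r • Finset.univ.affineCombination ℝ b (r⁻¹ • t)), r, ht, fun i => ?_⟩
  have hw : ∑ i, (r⁻¹ • t) i = 1 := by
    simp only [Pi.smul_apply, smul_eq_mul, ← Finset.mul_sum]
    exact inv_mul_cancel₀ ht.ne'
  rw [homothetCoord_neg_smul, b.coord_apply_combination_of_mem (Finset.mem_univ i) hw,
    Pi.smul_apply, smul_eq_mul, mul_inv_cancel_left₀ ht.ne']

lemma exists_pi_le_iff_representableByHomothets [Fintype ι] [Nontrivial ι] {X : Type*}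
    [Finite X] [LE X] : (∃ f : X → ι → ℝ, ∀ x y : X, x ≤ y ↔ ∀ i, f x i ≤ f y i) ↔
      RepresentableByHomothets X (convexHull ℝ (range b)) := by
  constructor
  · rintro ⟨f, hf⟩
    obtain ⟨m, hm⟩ := (finite_range fun xi : X × ι => f xi.1 xi.2).bddBelow
    have hpos : ∀ x i, 0 < f x i + (1 - m) := fun x i => by
      linarith [hm (mem_range_self (x, i))]
    choose c r hr hcoord using fun x =>
      b.exists_homothetCoord_eq (fun i => f x i + (1 - m))
        (Finset.sum_pos (fun i _ => hpos x i) Finset.univ_nonempty)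
    refine ⟨c, r, hr, fun x y => ?_⟩
    simp only [hf, b.homothet_subset_homothet_iff (hr x) (hr y), hcoord, add_le_add_iff_right]
  · rintro ⟨c, r, hr, hcr⟩
    exact ⟨fun x i => b.homothetCoord i (c x) (r x), fun x y =>
      (hcr x y).trans (b.homothet_subset_homothet_iff (hr x) (hr y))⟩

end AffineBasis

/-- A finite partial order has dimension at most 3 if and only if it is
isomorphic to the containment order of a family of positive homothets of a
fixed triangle in the plane. -/
theorem dim_le_three_iff_triangleContainment {X : Type*} [Fintype X] [PartialOrder X] :
    (∃ f : X → (Fin 3 → ℝ), ∀ x y : X, x ≤ y ↔ ∀ i, f x i ≤ f y i) ↔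
    (∃ A B C : Fin 2 → ℝ, AffineIndependent ℝ ![A, B, C] ∧
      ∃ (c : X → (Fin 2 → ℝ)) (r : X → ℝ), (∀ x, 0 < r x) ∧
        ∀ x y : X, x ≤ y ↔
          (fun p => c x + r x • p) '' (convexHull ℝ {A, B, C}) ⊆
          (fun p => c y + r y • p) '' (convexHull ℝ {A, B, C})) := by
  refine Iff.trans ?_ (exists_affineIndependent_triple_iff (by simp)
    fun T => RepresentableByHomothets X (convexHull ℝ T)).symm
  obtain ⟨b⟩ := AffineBasis.exists_affineBasis_of_finiteDimensional (ι := Fin 3) (k := ℝ)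
    (P := Fin 2 → ℝ) (by simp)
  exact ⟨fun hf => ⟨b, b.exists_pi_le_iff_representableByHomothets.1 hf⟩,
    fun ⟨b', h⟩ => b'.exists_pi_le_iff_representableByHomothets.2 h⟩
end

section
/- Let A, B, C ∈ ℝ² be affinely independent with A + B + C = 0, and set T = convexHull {A, B, C}. Let c_u, c_v, c_x, c_y ∈ ℝ² and r_u, r_v, r_x, r_y > 0, and for each w ∈ {u, v, x, y} write T_w = {c_w + r_w • p : p ∈ T}. Suppose T_u ⊆ T_v, T_x ⊆ T_y, T_x ⊄ T_v, and T_u ⊄ T_y. Then the segment [c_u, c_v] and the segment [c_x, c_y] are disjoint. -/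
/-! For a convex set `K` containing `0`, homothets `c + r • K` interpolate linearly: since
`a • T + b • T = T` for convex `T`, if `T₁ ⊆ T₂` then the homothet whose centre and radius are
the same convex combination of those of `T₁` and `T₂` lies between them. If `[c_u, c_v]` and
`[c_x, c_y]` met at `z`, this would give `T_u ⊆ z + ρ • K ⊆ T_v` and `T_x ⊆ z + ρ' • K ⊆ T_y`.
Homothets with a common centre are nested because `0 ∈ K`, so `T_u ⊆ T_y` or `T_x ⊆ T_v`. -/

open Set Pointwise

theorem image_add_smul_eq_singleton_add_smul {R E : Type*} [Add E] [SMul R E]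
    (K : Set E) (c : E) (r : R) : (fun p => c + r • p) '' K = {c} + r • K := by
  rw [singleton_add, ← image_smul, image_image]

section Homothet

variable {𝕜 E : Type*} [Field 𝕜] [LinearOrder 𝕜] [IsStrictOrderedRing 𝕜]
  [AddCommGroup E] [Module 𝕜 E] {K : Set E}

theorem Convex.smul_set_mono_of_zero_mem (hK : Convex 𝕜 K) (h0 : 0 ∈ K) {r r' : 𝕜}
    (hr : 0 ≤ r) (hrr' : r ≤ r') : r • K ⊆ r' • K := by
  rw [← add_sub_cancel r r', hK.add_smul hr (sub_nonneg.2 hrr')]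
  exact subset_add_left _ (zero_mem_smul_set h0)

theorem Convex.smul_homothet_add_smul_homothet (hK : Convex 𝕜 K) {a b r r' : 𝕜}
    (ha : 0 ≤ a) (hb : 0 ≤ b) (hr : 0 ≤ r) (hr' : 0 ≤ r') (c c' : E) :
    a • ({c} + r • K) + b • ({c'} + r' • K) = {a • c + b • c'} + (a * r + b * r') • K := by
  rw [smul_add, smul_add, smul_set_singleton, smul_set_singleton, smul_smul, smul_smul,
    hK.add_smul (mul_nonneg ha hr) (mul_nonneg hb hr'), add_add_add_comm,
    singleton_add_singleton]

theorem Convex.combo_self_set {S : Set E} (hS : Convex 𝕜 S) {a b : 𝕜} (ha : 0 ≤ a) (hb : 0 ≤ b)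
    (hab : a + b = 1) : a • S + b • S = S := by
  rw [← hS.add_smul ha hb, hab, one_smul]

variable {a b r r' : 𝕜} {c c' : E}

theorem Convex.subset_homothet_combo_of_subset (hK : Convex 𝕜 K)
    (h : {c} + r • K ⊆ {c'} + r' • K) (ha : 0 ≤ a) (hb : 0 ≤ b) (hab : a + b = 1)
    (hr : 0 ≤ r) (hr' : 0 ≤ r') :
    {c} + r • K ⊆ {a • c + b • c'} + (a * r + b * r') • K := by
  rw [← hK.smul_homothet_add_smul_homothet ha hb hr hr']
  calc {c} + r • K = a • ({c} + r • K) + b • ({c} + r • K) :=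
        (((convex_singleton c).add (hK.smul r)).combo_self_set ha hb hab).symm
    _ ⊆ _ := add_subset_add_left (smul_set_mono h)

theorem Convex.homothet_combo_subset_of_subset (hK : Convex 𝕜 K)
    (h : {c} + r • K ⊆ {c'} + r' • K) (ha : 0 ≤ a) (hb : 0 ≤ b) (hab : a + b = 1)
    (hr : 0 ≤ r) (hr' : 0 ≤ r') :
    {a • c + b • c'} + (a * r + b * r') • K ⊆ {c'} + r' • K := by
  rw [← hK.smul_homothet_add_smul_homothet ha hb hr hr']
  calc a • ({c} + r • K) + b • ({c'} + r' • K) ⊆ a • ({c'} + r' • K) + b • ({c'} + r' • K) :=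
        add_subset_add_right (smul_set_mono h)
    _ = _ := ((convex_singleton c').add (hK.smul r')).combo_self_set ha hb hab

end Homothet

theorem inv_three_smul_add_add_mem_convexHull {𝕜 E : Type*} [Field 𝕜] [LinearOrder 𝕜]
    [IsStrictOrderedRing 𝕜] [AddCommGroup E] [Module 𝕜 E] (A B C : E) :
    (3 : 𝕜)⁻¹ • (A + B + C) ∈ convexHull 𝕜 {A, B, C} := by
  have hBC : (2 : 𝕜)⁻¹ • B + (2 : 𝕜)⁻¹ • C ∈ convexHull 𝕜 {A, B, C} :=
    convex_convexHull 𝕜 _ (subset_convexHull 𝕜 _ (by simp)) (subset_convexHull 𝕜 _ (by simp))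
      (by norm_num) (by norm_num) (by norm_num)
  convert convex_convexHull 𝕜 _ (subset_convexHull 𝕜 _ (mem_insert A _)) hBC
    (by norm_num : (0 : 𝕜) ≤ 3⁻¹) (by norm_num : (0 : 𝕜) ≤ 2 / 3) (by norm_num) using 1
  module

theorem disjoint_segments_of_strongly_independent_general
    (A B C : Fin 2 → ℝ)
    (hbary : A + B + C = 0)
    (cu cv cx cy : Fin 2 → ℝ) (ru rv rx ry : ℝ)
    (hru : 0 < ru) (hrv : 0 < rv) (hrx : 0 < rx) (hry : 0 < ry)
    (huv : (fun p => cu + ru • p) '' (convexHull ℝ {A, B, C}) ⊆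
           (fun p => cv + rv • p) '' (convexHull ℝ {A, B, C}))
    (hxy : (fun p => cx + rx • p) '' (convexHull ℝ {A, B, C}) ⊆
           (fun p => cy + ry • p) '' (convexHull ℝ {A, B, C}))
    (hxv : ¬ ((fun p => cx + rx • p) '' (convexHull ℝ {A, B, C}) ⊆
              (fun p => cv + rv • p) '' (convexHull ℝ {A, B, C})))
    (huy : ¬ ((fun p => cu + ru • p) '' (convexHull ℝ {A, B, C}) ⊆
              (fun p => cy + ry • p) '' (convexHull ℝ {A, B, C}))) :
    Disjoint (segment ℝ cu cv) (segment ℝ cx cy) := by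
  set K := convexHull ℝ {A, B, C}
  have hK : Convex ℝ K := convex_convexHull ℝ _
  have h0 : (0 : Fin 2 → ℝ) ∈ K := by
    simpa [hbary] using inv_three_smul_add_add_mem_convexHull (𝕜 := ℝ) A B C
  simp only [image_add_smul_eq_singleton_add_smul] at huv hxy hxv huy
  rw [Set.disjoint_left]
  rintro _ ⟨a, b, ha, hb, hab, rfl⟩ ⟨a', b', ha', hb', hab', hz⟩
  have hu := hK.subset_homothet_combo_of_subset huv ha hb hab hru.le hrv.le
  have hv := hK.homothet_combo_subset_of_subset huv ha hb hab hru.le hrv.le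
  have hx := hK.subset_homothet_combo_of_subset hxy ha' hb' hab' hrx.le hry.le
  have hy := hK.homothet_combo_subset_of_subset hxy ha' hb' hab' hrx.le hry.le
  rw [hz] at hx hy
  rcases le_total (a * ru + b * rv) (a' * rx + b' * ry) with h | h
  · exact huy (hu.trans ((add_subset_add_left
      (hK.smul_set_mono_of_zero_mem h0 (by positivity) h)).trans hy))
  · exact hxv (hx.trans ((add_subset_add_left
      (hK.smul_set_mono_of_zero_mem h0 (by positivity) h)).trans hv))

/-- Disjoint paths lemma: in the barycenter drawing of a triangle containment
representation, strongly independent edges do not cross. Here the triangle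
`T = convexHull {A, B, C}` has barycenter at the origin (`A + B + C = 0`), so
the barycenter of the homothet `{c + r • p : p ∈ T}` is `c`. -/
theorem disjoint_segments_of_strongly_independent
    (A B C : Fin 2 → ℝ) (hABC : AffineIndependent ℝ ![A, B, C])
    (hbary : A + B + C = 0)
    (cu cv cx cy : Fin 2 → ℝ) (ru rv rx ry : ℝ)
    (hru : 0 < ru) (hrv : 0 < rv) (hrx : 0 < rx) (hry : 0 < ry)
    (huv : (fun p => cu + ru • p) '' (convexHull ℝ {A, B, C}) ⊆
           (fun p => cv + rv • p) '' (convexHull ℝ {A, B, C}))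
    (hxy : (fun p => cx + rx • p) '' (convexHull ℝ {A, B, C}) ⊆
           (fun p => cy + ry • p) '' (convexHull ℝ {A, B, C}))
    (hxv : ¬ ((fun p => cx + rx • p) '' (convexHull ℝ {A, B, C}) ⊆
              (fun p => cv + rv • p) '' (convexHull ℝ {A, B, C})))
    (huy : ¬ ((fun p => cu + ru • p) '' (convexHull ℝ {A, B, C}) ⊆
              (fun p => cy + ry • p) '' (convexHull ℝ {A, B, C}))) :
    Disjoint (segment ℝ cu cv) (segment ℝ cx cy) :=
  disjoint_segments_of_strongly_independent_general A B C hbary cu cv cx cy ru rv rx ry hru hrv hrx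
    hry huv hxy hxv huy
end

section
/- Let t ≥ 2, let c ∈ ℝ, and let u, v ∈ (Fin t → ℝ) satisfy Σᵢ u i ≥ c and Σᵢ v i ≥ c. For w ∈ {u, v} write Δ(w) = {p ∈ (Fin t → ℝ) : p ≤ w componentwise and Σᵢ p i = c}. Then Δ(u) ⊆ Δ(v) if and only if u ≤ v in the componentwise order. -/
/-!
If `Δ(u) ⊆ Δ(v)`, fix a coordinate `i` and lower `u` at a different coordinate `j` by the excess
`Σ u - c`. The result lies in `Δ(u)`, hence in `Δ(v)`, and still has `i`-th coordinate `u i`,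
so `u i ≤ v i`.
-/

section ConeSlice

variable {ι R : Type*} [Fintype ι] [AddCommGroup R] [PartialOrder R]

def coneSlice (u : ι → R) (c : R) : Set (ι → R) :=
  {p | p ≤ u ∧ ∑ i, p i = c}

theorem coneSlice_mono {u v : ι → R} (c : R) (huv : u ≤ v) : coneSlice u c ⊆ coneSlice v c :=
  fun _ ⟨hpu, hsum⟩ => ⟨hpu.trans huv, hsum⟩

theorem sub_single_excess_mem_coneSlice [DecidableEq ι] [IsOrderedAddMonoid R] {u : ι → R}
    {c : R} (hu : c ≤ ∑ i, u i) (j : ι) :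
    u - Pi.single j (∑ i, u i - c) ∈ coneSlice u c := by
  refine ⟨sub_le_self _ (Pi.single_nonneg.mpr (sub_nonneg.mpr hu)), ?_⟩
  simp only [Pi.sub_apply, Finset.sum_sub_distrib, Finset.sum_pi_single', Finset.mem_univ,
    if_true, sub_sub_cancel]

theorem le_of_coneSlice_subset [IsOrderedAddMonoid R] [Nontrivial ι] {u v : ι → R} {c : R}
    (hu : c ≤ ∑ i, u i) (h : coneSlice u c ⊆ coneSlice v c) : u ≤ v := by
  classical
  intro i
  obtain ⟨j, hji⟩ := exists_ne i
  have hle := (h (sub_single_excess_mem_coneSlice hu j)).1 i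
  simpa [Pi.single_eq_of_ne' hji] using hle

theorem coneSlice_subset_coneSlice_iff [IsOrderedAddMonoid R] [Nontrivial ι] {u v : ι → R}
    {c : R} (hu : c ≤ ∑ i, u i) : coneSlice u c ⊆ coneSlice v c ↔ u ≤ v :=
  ⟨le_of_coneSlice_subset hu, coneSlice_mono c⟩

end ConeSlice

theorem coneSlice_subset_iff_le_general
    (t : ℕ) (ht : 2 ≤ t) (c : ℝ) (u v : Fin t → ℝ)
    (hu : c ≤ ∑ i, u i) :
    ({p : Fin t → ℝ | p ≤ u ∧ (∑ i, p i) = c} ⊆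
     {p : Fin t → ℝ | p ≤ v ∧ (∑ i, p i) = c}) ↔ u ≤ v := by
  have : Nontrivial (Fin t) := Fin.nontrivial_iff_two_le.mpr ht
  exact coneSlice_subset_coneSlice_iff hu

/-- Containment of the hyperplane slices of downward cones exactly captures
componentwise comparability of the cone apices: for apices in the positive
halfspace of `{p : Σᵢ p i = c}`, `Δ(u) ⊆ Δ(v)` iff `u ≤ v`. -/
theorem coneSlice_subset_iff_le
    (t : ℕ) (ht : 2 ≤ t) (c : ℝ) (u v : Fin t → ℝ)
    (hu : c ≤ ∑ i, u i) (hv : c ≤ ∑ i, v i) :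
    ({p : Fin t → ℝ | p ≤ u ∧ (∑ i, p i) = c} ⊆
     {p : Fin t → ℝ | p ≤ v ∧ (∑ i, p i) = c}) ↔ u ≤ v :=
  coneSlice_subset_iff_le_general t ht c u v hu
end

section
/- Let t ≥ 2 and let ≤ be a partial order on a finite set X. Let X = X⁺ ∪ X⁻ be a partition (X⁺ ∩ X⁻ = ∅) such that X⁻ is a downset and X⁺ is an upset of the order. Fix c ∈ ℝ. Suppose there are maps a : X⁺ → (Fin t → ℝ), r : X⁺ → ℝ and b : X⁻ → (Fin t → ℝ), s : X⁻ → ℝ with r x > 0, (Σᵢ a x i) − r x = c for all x ∈ X⁺, and s y > 0, (Σᵢ b y i) + s y = c for all y ∈ X⁻, and write Δ(x) = {a x − r x • q : q ∈ stdSimplex ℝ (Fin t)} for x ∈ X⁺ and Δ*(y) = {b y + s y • q : q ∈ stdSimplex ℝ (Fin t)} for y ∈ X⁻. Assume: (i) for all x, x' ∈ X⁺, x ≤ x' iff Δ(x) ⊆ Δ(x'); (ii) for all y, y' ∈ X⁻, y ≤ y' iff Δ*(y') ⊆ Δ*(y); (iii) for all x ∈ X⁺ and y ∈ X⁻, y ≤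 x iff Δ(x) ∩ Δ*(y) ≠ ∅. Then there exists a map f : X → (Fin t → ℝ) such that for all z, z' ∈ X, z ≤ z' iff f z ≤ f z' componentwise (i.e., the dimension of the order is at most t). -/
/-!
On the hyperplane `Σᵢ pᵢ = c` the simplex `b + s • stdSimplex` is exactly the cone
`{p | b ≤ p}` cut by the hyperplane, and `a - r • stdSimplex` is `{p | p ≤ a}` cut by it.
Hence containment of two such simplices, and nonemptiness of the intersection of a
reflected one with an upright one, are read off the apexes `a x`, `b y` componentwise.
Sending `x ∈ X⁺` to `a x` and `y ∈ X⁻` to `b y` is therefore an order embedding: within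
each part and from `X⁻` to `X⁺` by hypothesis, while no element of `X⁺` lies below one
of `X⁻`, both in the order (`X⁺` is an upset) and in the image (apex sums differ by
`r x + s y > 0`).
-/

open Finset

section StdSimplex

variable {ι : Type*} [Fintype ι]

theorem mem_image_add_smul_stdSimplex_iff {b p : ι → ℝ} {s : ℝ} (hs : 0 < s) :
    p ∈ (fun q => b + s • q) '' stdSimplex ℝ ι ↔ b ≤ p ∧ ∑ i, p i = ∑ i, b i + s := by
  have hsolve : ∀ q, b + s • q = p ↔ q = s⁻¹ • (p - b) := fun q => by
    rw [eq_inv_smul_iff₀ hs.ne', eq_sub_iff_add_eq']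
  simp only [Set.mem_image, hsolve, exists_eq_right, stdSimplex, Set.mem_ofPred_eq, Pi.le_def,
    Pi.smul_apply, Pi.sub_apply, smul_eq_mul]
  refine and_congr (forall_congr' fun i => ?_) ?_
  · rw [mul_nonneg_iff_of_pos_left (inv_pos.2 hs), sub_nonneg]
  · rw [← mul_sum, sum_sub_distrib, inv_mul_eq_one₀ hs.ne', eq_sub_iff_add_eq', eq_comm]

theorem neg_image_sub_smul_stdSimplex (a : ι → ℝ) (r : ℝ) :
    -((fun q => a - r • q) '' stdSimplex ℝ ι) = (fun q => -a + r • q) '' stdSimplex ℝ ι := by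
  rw [← Set.image_neg_eq_neg, Set.image_image]
  congr 1
  funext q
  rw [neg_sub, sub_eq_neg_add]

theorem mem_image_sub_smul_stdSimplex_iff {a p : ι → ℝ} {r : ℝ} (hr : 0 < r) :
    p ∈ (fun q => a - r • q) '' stdSimplex ℝ ι ↔ p ≤ a ∧ ∑ i, p i = ∑ i, a i - r := by
  rw [← Set.neg_mem_neg, neg_image_sub_smul_stdSimplex, mem_image_add_smul_stdSimplex_iff hr]
  simp only [neg_le_neg_iff, Pi.neg_apply, sum_neg_distrib]
  exact and_congr_right' ⟨fun h => by linarith, fun h => by linarith⟩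

theorem image_add_smul_stdSimplex_subset_iff [Nontrivial ι] {b b' : ι → ℝ} {s s' : ℝ}
    (hs : 0 < s) (hs' : 0 < s') (hsum : ∑ i, b' i + s' = ∑ i, b i + s) :
    (fun q => b' + s' • q) '' stdSimplex ℝ ι ⊆ (fun q => b + s • q) '' stdSimplex ℝ ι ↔
      b ≤ b' := by
  classical
  constructor
  · intro hsub j
    obtain ⟨i, hij⟩ := exists_ne j
    -- the vertex `b' + s' • eᵢ` agrees with `b'` in the coordinate `j ≠ i`
    have hvertex := hsub ⟨Pi.single i 1, single_mem_stdSimplex ℝ i, rfl⟩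
    simpa [hij] using ((mem_image_add_smul_stdSimplex_iff hs).1 hvertex).1 j
  · intro hle p hp
    rw [mem_image_add_smul_stdSimplex_iff hs'] at hp
    rw [mem_image_add_smul_stdSimplex_iff hs]
    exact ⟨hle.trans hp.1, hp.2.trans hsum⟩

theorem image_sub_smul_stdSimplex_subset_iff [Nontrivial ι] {a a' : ι → ℝ} {r r' : ℝ}
    (hr : 0 < r) (hr' : 0 < r') (hsum : ∑ i, a i - r = ∑ i, a' i - r') :
    (fun q => a - r • q) '' stdSimplex ℝ ι ⊆ (fun q => a' - r' • q) '' stdSimplex ℝ ι ↔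
      a ≤ a' := by
  rw [← Set.neg_subset_neg, neg_image_sub_smul_stdSimplex, neg_image_sub_smul_stdSimplex,
    image_add_smul_stdSimplex_subset_iff hr' hr, neg_le_neg_iff]
  simp only [Pi.neg_apply, sum_neg_distrib]
  linarith

theorem image_sub_smul_inter_image_add_smul_stdSimplex_nonempty_iff {a b : ι → ℝ} {r s : ℝ}
    (hr : 0 < r) (hs : 0 < s) (hsum : ∑ i, a i - r = ∑ i, b i + s) :
    ((fun q => a - r • q) '' stdSimplex ℝ ι ∩ (fun q => b + s • q) '' stdSimplex ℝ ι).Nonempty ↔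
      b ≤ a := by
  simp only [Set.Nonempty, Set.mem_inter_iff, mem_image_sub_smul_stdSimplex_iff hr,
    mem_image_add_smul_stdSimplex_iff hs]
  constructor
  · rintro ⟨p, ⟨hpa, -⟩, hbp, -⟩
    exact hbp.trans hpa
  · intro hba
    -- the point dividing the segment from `b` to `a` in the ratio `s : r`
    set θ := s / (r + s)
    have hθ₀ : 0 ≤ θ := by positivity
    have hθ₁ : θ ≤ 1 := (div_le_one (by positivity)).2 (by linarith)
    have hdir : 0 ≤ a - b := sub_nonneg.2 hba
    have hpsum : ∑ i, (b + θ • (a - b)) i = ∑ i, b i + s := by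
      simp only [Pi.add_apply, Pi.smul_apply, Pi.sub_apply, smul_eq_mul, sum_add_distrib,
        ← mul_sum, sum_sub_distrib]
      rw [show ∑ i, a i - ∑ i, b i = r + s by linarith, div_mul_cancel₀ _ (by positivity)]
    refine ⟨b + θ • (a - b), ⟨?_, hpsum.trans hsum.symm⟩, ?_, hpsum⟩
    · calc b + θ • (a - b) ≤ b + (a - b) := add_le_add_right (smul_le_of_le_one_left hdir hθ₁) b
        _ = a := add_sub_cancel b a
    · exact le_add_of_nonneg_right (smul_nonneg hθ₀ hdir)

end StdSimplex

theorem dim_le_of_separated_simplices_general {X : Type*} [PartialOrder X]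
    (t : ℕ) (ht : 2 ≤ t) (Xp Xm : Set X)
    (hcover : Xp ∪ Xm = Set.univ)
    (hup : ∀ x x' : X, x ≤ x' → x ∈ Xp → x' ∈ Xp)
    (c : ℝ)
    (a : X → (Fin t → ℝ)) (r : X → ℝ) (b : X → (Fin t → ℝ)) (s : X → ℝ)
    (hr : ∀ x ∈ Xp, 0 < r x) (ha : ∀ x ∈ Xp, (∑ i, a x i) - r x = c)
    (hs : ∀ y ∈ Xm, 0 < s y) (hb : ∀ y ∈ Xm, (∑ i, b y i) + s y = c)
    (hplus : ∀ x ∈ Xp, ∀ x' ∈ Xp, x ≤ x' ↔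
      (fun q => a x - r x • q) '' stdSimplex ℝ (Fin t) ⊆
      (fun q => a x' - r x' • q) '' stdSimplex ℝ (Fin t))
    (hminus : ∀ y ∈ Xm, ∀ y' ∈ Xm, y ≤ y' ↔
      (fun q => b y' + s y' • q) '' stdSimplex ℝ (Fin t) ⊆
      (fun q => b y + s y • q) '' stdSimplex ℝ (Fin t))
    (hcross : ∀ x ∈ Xp, ∀ y ∈ Xm, y ≤ x ↔
      ((fun q => a x - r x • q) '' stdSimplex ℝ (Fin t) ∩
       (fun q => b y + s y • q) '' stdSimplex ℝ (Fin t)).Nonempty) :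
    ∃ f : X → (Fin t → ℝ), ∀ z z' : X, z ≤ z' ↔ ∀ i, f z i ≤ f z' i := by
  classical
  have : Nontrivial (Fin t) := Fin.nontrivial_iff_two_le.2 ht
  have hm : ∀ z, z ∉ Xp → z ∈ Xm := fun z hz =>
    (hcover ▸ Set.mem_univ z : z ∈ Xp ∪ Xm).resolve_left hz
  refine ⟨fun z => if z ∈ Xp then a z else b z, fun z z' => ?_⟩
  rw [← Pi.le_def]
  by_cases hz : z ∈ Xp <;> by_cases hz' : z' ∈ Xp <;> simp only [hz, hz', if_true, if_false]
  · rw [hplus z hz z' hz', image_sub_smul_stdSimplex_subset_iff (hr z hz) (hr z' hz')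
      ((ha z hz).trans (ha z' hz').symm)]
  · have hz'm := hm z' hz'
    refine iff_of_false (fun h => hz' (hup z z' h hz)) fun h => ?_
    have hle : ∑ i, a z i ≤ ∑ i, b z' i := sum_le_sum fun i _ => h i
    linarith [ha z hz, hb z' hz'm, hr z hz, hs z' hz'm]
  · rw [hcross z' hz' z (hm z hz), image_sub_smul_inter_image_add_smul_stdSimplex_nonempty_iff
      (hr z' hz') (hs z (hm z hz)) ((ha z' hz').trans (hb z (hm z hz)).symm)]
  · rw [hminus z (hm z hz) z' (hm z' hz'), image_add_smul_stdSimplex_subset_iff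
      (hs z (hm z hz)) (hs z' (hm z' hz')) ((hb z' (hm z' hz')).trans (hb z (hm z hz)).symm)]

/-- Certificate criterion for dimension at most `t`: if a finite partial order
is partitioned into an upset `X⁺` and a downset `X⁻`, the elements of `X⁺` are
represented by point-reflected homothets `Δ(x) = a x - r x • stdSimplex` and
the elements of `X⁻` by positive homothets `Δ*(y) = b y + s y • stdSimplex` of
the standard simplex, all lying in the hyperplane `{p : Σᵢ p i = c}`, such that
containment on `X⁺`, dual containment on `X⁻` and intersection across the
partition represent the order, then the order has dimension at most `t`. -/
theorem dim_le_of_separated_simplices {X : Type*} [Fintype X] [PartialOrder X]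
    (t : ℕ) (ht : 2 ≤ t) (Xp Xm : Set X)
    (hcover : Xp ∪ Xm = Set.univ) (hdisj : Xp ∩ Xm = ∅)
    (hdown : ∀ y y' : X, y' ≤ y → y ∈ Xm → y' ∈ Xm)
    (hup : ∀ x x' : X, x ≤ x' → x ∈ Xp → x' ∈ Xp)
    (c : ℝ)
    (a : X → (Fin t → ℝ)) (r : X → ℝ) (b : X → (Fin t → ℝ)) (s : X → ℝ)
    (hr : ∀ x ∈ Xp, 0 < r x) (ha : ∀ x ∈ Xp, (∑ i, a x i) - r x = c)
    (hs : ∀ y ∈ Xm, 0 < s y) (hb : ∀ y ∈ Xm, (∑ i, b y i) + s y = c)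
    (hplus : ∀ x ∈ Xp, ∀ x' ∈ Xp, x ≤ x' ↔
      (fun q => a x - r x • q) '' stdSimplex ℝ (Fin t) ⊆
      (fun q => a x' - r x' • q) '' stdSimplex ℝ (Fin t))
    (hminus : ∀ y ∈ Xm, ∀ y' ∈ Xm, y ≤ y' ↔
      (fun q => b y' + s y' • q) '' stdSimplex ℝ (Fin t) ⊆
      (fun q => b y + s y • q) '' stdSimplex ℝ (Fin t))
    (hcross : ∀ x ∈ Xp, ∀ y ∈ Xm, y ≤ x ↔
      ((fun q => a x - r x • q) '' stdSimplex ℝ (Fin t) ∩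
       (fun q => b y + s y • q) '' stdSimplex ℝ (Fin t)).Nonempty) :
    ∃ f : X → (Fin t → ℝ), ∀ z z' : X, z ≤ z' ↔ ∀ i, f z i ≤ f z' i :=
  dim_le_of_separated_simplices_general t ht Xp Xm hcover hup c a r b s hr ha hs hb hplus hminus
    hcross
end
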